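/- arXiv:2407.13189 — 8 statements merged into one kernel-verified Lean document; each statement's English description precedes it below -/
import Mathlib

section
/- Let (Ω, 𝓕, μ) be a probability space and let ω: ℝ → ℝ be strictly increasing, ρ: ℝ → ℝ strictly negative, and φ, ψ: ℝ → ℝ differentiable with φ' = −ω·ρ and ψ' = ρ. Let a, b: Ω → ℝ be measurable with a(x) > 0 for all x, and suppose there is a measurable u₀: Ω → ℝ with ω(u₀(x)) = b(x)/a(x) for all x. Assume that x ↦ a(x)·φ(u₀(x)) + b(x)·ψ(u₀(x)) is μ-integrable. Then the pointwise infimum equals the infimum of the integrals: ∫ a(x)·inf_{z∈ℝ}(φ(z) + (b(x)/a(x))·ψ(z)) dμ(x) = inf over all measurable u: Ω → ℝ with integrable cost of ∫ (a(x)·φ(u(x)) + b(x)·ψ(u(x))) dμ(x), and both equal ∫ (a(x)·φ(u₀(x)) + b(x)·ψ(u₀(x))) dμ(x). -/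
open MeasureTheory

lemma min_at_aux (ω ρ φ ψ : ℝ → ℝ)
    (hω : StrictMono ω) (hρ : ∀ z, ρ z < 0)
    (hφ : ∀ z, HasDerivAt φ (-(ω z * ρ z)) z)
    (hψ : ∀ z, HasDerivAt ψ (ρ z) z)
    (c z₀ : ℝ) (h : ω z₀ = c) :
    ∀ z, φ z₀ + c * ψ z₀ ≤ φ z + c * ψ z := by
  intro z
  set g : ℝ → ℝ := fun z => φ z + c * ψ z with hg
  have hder : ∀ y, HasDerivAt g (ρ y * (c - ω y)) y := by
    intro y
    have : HasDerivAt g (-(ω y * ρ y) + c * ρ y) y := (hφ y).add ((hψ y).const_mul c)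
    convert this using 1
    ring
  have hcont : Continuous g :=
    continuous_iff_continuousAt.mpr fun y => (hder y).continuousAt
  rcases le_total z z₀ with hz | hz
  · have hanti : AntitoneOn g (Set.Iic z₀) := by
      apply antitoneOn_of_deriv_nonpos (convex_Iic z₀) hcont.continuousOn
        (fun y _ => (hder y).differentiableAt.differentiableWithinAt)
      intro y hy
      rw [interior_Iic] at hy
      rw [(hder y).deriv]
      have h1 : ω y < c := h ▸ hω hy
      have := hρ y
      nlinarith
    exact hanti hz (Set.mem_Iic.mpr le_rfl) hz
  · have hmono : MonotoneOn g (Set.Ici z₀) := by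
      apply monotoneOn_of_deriv_nonneg (convex_Ici z₀) hcont.continuousOn
        (fun y _ => (hder y).differentiableAt.differentiableWithinAt)
      intro y hy
      rw [interior_Ici] at hy
      rw [(hder y).deriv]
      have h1 : c < ω y := h ▸ hω hy
      have := hρ y
      nlinarith
    exact hmono (Set.mem_Ici.mpr le_rfl) hz hz

theorem stmt_2 {Ω : Type*} [MeasurableSpace Ω] (μ : Measure Ω) [IsProbabilityMeasure μ]
    (ω ρ φ ψ : ℝ → ℝ)
    (hω : StrictMono ω) (hρ : ∀ z, ρ z < 0)
    (hφ : ∀ z, HasDerivAt φ (-(ω z * ρ z)) z)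
    (hψ : ∀ z, HasDerivAt ψ (ρ z) z)
    (a b : Ω → ℝ) (ha : Measurable a) (hb : Measurable b) (hapos : ∀ x, 0 < a x)
    (u₀ : Ω → ℝ) (hu₀m : Measurable u₀) (hu₀ : ∀ x, ω (u₀ x) = b x / a x)
    (hint : Integrable (fun x => a x * φ (u₀ x) + b x * ψ (u₀ x)) μ) :
    (∫ x, a x * (⨅ z : ℝ, (φ z + (b x / a x) * ψ z)) ∂μ
      = sInf {J : ℝ | ∃ u : Ω → ℝ, Measurable u ∧
          Integrable (fun x => a x * φ (u x) + b x * ψ (u x)) μ ∧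
          J = ∫ x, (a x * φ (u x) + b x * ψ (u x)) ∂μ}) ∧
    (∫ x, a x * (⨅ z : ℝ, (φ z + (b x / a x) * ψ z)) ∂μ
      = ∫ x, (a x * φ (u₀ x) + b x * ψ (u₀ x)) ∂μ) := by
  have hmin : ∀ x z, φ (u₀ x) + (b x / a x) * ψ (u₀ x) ≤ φ z + (b x / a x) * ψ z :=
    fun x => min_at_aux ω ρ φ ψ hω hρ hφ hψ (b x / a x) (u₀ x) (hu₀ x)
  have hinf : ∀ x, (⨅ z : ℝ, (φ z + (b x / a x) * ψ z)) = φ (u₀ x) + (b x / a x) * ψ (u₀ x) := by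
    intro x
    apply le_antisymm
    · exact ciInf_le ⟨_, Set.forall_mem_range.mpr (hmin x)⟩ (u₀ x)
    · exact le_ciInf (hmin x)
  have hane : ∀ x, a x ≠ 0 := fun x => (hapos x).ne'
  have heq : ∀ x, a x * (⨅ z : ℝ, (φ z + (b x / a x) * ψ z))
      = a x * φ (u₀ x) + b x * ψ (u₀ x) := by
    intro x
    have hc : a x * (b x / a x) = b x := by rw [mul_comm, div_mul_cancel₀ _ (hane x)]
    rw [hinf x, mul_add, ← mul_assoc, hc]
  have h2 : ∫ x, a x * (⨅ z : ℝ, (φ z + (b x / a x) * ψ z)) ∂μ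
      = ∫ x, (a x * φ (u₀ x) + b x * ψ (u₀ x)) ∂μ := by
    exact integral_congr_ae (Filter.Eventually.of_forall heq)
  refine ⟨?_, h2⟩
  rw [h2]
  symm
  apply IsLeast.csInf_eq
  constructor
  · exact ⟨u₀, hu₀m, hint, rfl⟩
  · rintro J ⟨u, hum, huint, rfl⟩
    apply integral_mono hint huint
    intro x
    have h1 := hmin x (u x)
    have h2 : a x * (φ (u₀ x) + (b x / a x) * ψ (u₀ x)) ≤ a x * (φ (u x) + (b x / a x) * ψ (u x)) :=
      mul_le_mul_of_nonneg_left h1 (hapos x).le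
    have hc : a x * (b x / a x) = b x := by rw [mul_comm, div_mul_cancel₀ _ (hane x)]
    have e : ∀ z, a x * (φ z + (b x / a x) * ψ z) = a x * φ z + b x * ψ z := by
      intro z; rw [mul_add, ← mul_assoc, hc]
    simpa [e] using h2
end

section
/- Let (Ω, 𝓕, μ) be a probability space and let ω: ℝ → ℝ be strictly increasing, ρ: ℝ → ℝ strictly negative, and φ, ψ: ℝ → ℝ differentiable with φ' = −ω·ρ and ψ' = ρ. Let a, b: Ω → ℝ be measurable with a(x) > 0 for all x, and let u₀: Ω → ℝ be measurable with ω(u₀(x)) = b(x)/a(x) for all x and with x ↦ a(x)·φ(u₀(x)) + b(x)·ψ(u₀(x)) μ-integrable. Then for every measurable u: Ω → ℝ such that x ↦ a(x)·φ(u(x)) + b(x)·ψ(u(x)) is μ-integrable, ∫ (a·φ∘u₀ + b·ψ∘u₀) dμ ≤ ∫ (a·φ∘u + b·ψ∘u) dμ. -/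
open MeasureTheory

lemma key_pointwise (ω ρ φ ψ : ℝ → ℝ)
    (hω : StrictMono ω) (hρ : ∀ z, ρ z < 0)
    (hφ : ∀ z, HasDerivAt φ (-(ω z * ρ z)) z)
    (hψ : ∀ z, HasDerivAt ψ (ρ z) z)
    (A B : ℝ) (hA : 0 < A) (t₀ : ℝ) (hB : B = A * ω t₀) (t : ℝ) :
    A * φ t₀ + B * ψ t₀ ≤ A * φ t + B * ψ t := by
  set F : ℝ → ℝ := fun z => A * φ z + B * ψ z with hF
  have hF' : ∀ z, HasDerivAt F (A * ρ z * (ω t₀ - ω z)) z := by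
    intro z
    have := ((hφ z).const_mul A).add ((hψ z).const_mul B)
    have e : A * ρ z * (ω t₀ - ω z) = A * -(ω z * ρ z) + B * ρ z := by rw [hB]; ring
    rw [e]; exact this
  have hφc : Continuous φ := Differentiable.continuous (fun z => (hφ z).differentiableAt)
  have hψc : Continuous ψ := Differentiable.continuous (fun z => (hψ z).differentiableAt)
  have hcont : Continuous F := (continuous_const.mul hφc).add (continuous_const.mul hψc)
  rcases le_total t₀ t with h | h
  · have hmono : MonotoneOn F (Set.Ici t₀) := by
      apply monotoneOn_of_deriv_nonneg (convex_Ici t₀) hcont.continuousOn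
      · intro z hz; exact (hF' z).differentiableAt.differentiableWithinAt
      · intro z hz
        rw [(hF' z).deriv]
        rw [interior_Ici] at hz
        have h1 : ω t₀ - ω z < 0 := by simp [hω hz]
        have h2 := mul_pos (mul_pos hA (neg_pos.2 (hρ z))) (neg_pos.2 h1)
        nlinarith
    exact hmono (Set.self_mem_Ici) h h
  · have hanti : AntitoneOn F (Set.Iic t₀) := by
      apply antitoneOn_of_deriv_nonpos (convex_Iic t₀) hcont.continuousOn
      · intro z hz; exact (hF' z).differentiableAt.differentiableWithinAt
      · intro z hz
        rw [(hF' z).deriv]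
        rw [interior_Iic] at hz
        have h1 : 0 < ω t₀ - ω z := by simp [hω hz]
        have h2 := mul_pos (mul_pos hA h1) (neg_pos.2 (hρ z))
        nlinarith
    exact hanti h (Set.self_mem_Iic) h

theorem stmt_3 {Ω : Type*} [MeasurableSpace Ω] (μ : Measure Ω) [IsProbabilityMeasure μ]
    (ω ρ φ ψ : ℝ → ℝ)
    (hω : StrictMono ω) (hρ : ∀ z, ρ z < 0)
    (hφ : ∀ z, HasDerivAt φ (-(ω z * ρ z)) z)
    (hψ : ∀ z, HasDerivAt ψ (ρ z) z)
    (a b : Ω → ℝ) (ha : Measurable a) (hb : Measurable b) (hapos : ∀ x, 0 < a x)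
    (u₀ : Ω → ℝ) (hu₀m : Measurable u₀) (hu₀ : ∀ x, ω (u₀ x) = b x / a x)
    (hint₀ : Integrable (fun x => a x * φ (u₀ x) + b x * ψ (u₀ x)) μ) :
    ∀ u : Ω → ℝ, Measurable u →
      Integrable (fun x => a x * φ (u x) + b x * ψ (u x)) μ →
      ∫ x, (a x * φ (u₀ x) + b x * ψ (u₀ x)) ∂μ
        ≤ ∫ x, (a x * φ (u x) + b x * ψ (u x)) ∂μ := by
  intro u hum hint
  apply integral_mono hint₀ hint
  intro x
  have hB : b x = a x * ω (u₀ x) := by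
    rw [hu₀ x, mul_div_cancel₀ _ (hapos x).ne']
  exact key_pointwise ω ρ φ ψ hω hρ hφ hψ (a x) (b x) (hapos x) (u₀ x) hB (u x)
end

section
/- Let (Ω, 𝓕, μ) be a probability space and let ω: ℝ → ℝ be strictly increasing, ρ: ℝ → ℝ strictly negative, and φ, ψ: ℝ → ℝ differentiable with φ' = −ω·ρ and ψ' = ρ. Let a, b: Ω → ℝ be measurable with a(x) > 0 for all x, and let u₀: Ω → ℝ be measurable with ω(u₀(x)) = b(x)/a(x) for all x and with integrable cost. If u: Ω → ℝ is measurable with integrable cost and achieves the same cost, i.e. ∫ (a·φ∘u + b·ψ∘u) dμ = ∫ (a·φ∘u₀ + b·ψ∘u₀) dμ, then u = u₀ μ-almost everywhere. -/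
open MeasureTheory

theorem stmt_4 {Ω : Type*} [MeasurableSpace Ω] (μ : Measure Ω) [IsProbabilityMeasure μ]
    (ω ρ φ ψ : ℝ → ℝ)
    (hω : StrictMono ω) (hρ : ∀ z, ρ z < 0)
    (hφ : ∀ z, HasDerivAt φ (-(ω z * ρ z)) z)
    (hψ : ∀ z, HasDerivAt ψ (ρ z) z)
    (a b : Ω → ℝ) (ha : Measurable a) (hb : Measurable b) (hapos : ∀ x, 0 < a x)
    (u₀ : Ω → ℝ) (hu₀m : Measurable u₀) (hu₀ : ∀ x, ω (u₀ x) = b x / a x)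
    (hint₀ : Integrable (fun x => a x * φ (u₀ x) + b x * ψ (u₀ x)) μ)
    (u : Ω → ℝ) (hum : Measurable u)
    (hint : Integrable (fun x => a x * φ (u x) + b x * ψ (u x)) μ)
    (heq : ∫ x, (a x * φ (u x) + b x * ψ (u x)) ∂μ
         = ∫ x, (a x * φ (u₀ x) + b x * ψ (u₀ x)) ∂μ) :
    ∀ᵐ x ∂μ, u x = u₀ x := by
  -- pointwise strict minimality
  have key : ∀ (c d t₀ t : ℝ), 0 < c → ω t₀ = d / c → t ≠ t₀ →
      c * φ t₀ + d * ψ t₀ < c * φ t + d * ψ t := by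
    intro c d t₀ t hc hω₀ hne
    set f : ℝ → ℝ := fun s => c * φ s + d * ψ s with hf
    have hder : ∀ s, HasDerivAt f (ρ s * (d - c * ω s)) s := by
      intro s
      have h := ((hφ s).const_mul c).add ((hψ s).const_mul d)
      rw [show ρ s * (d - c * ω s) = c * -(ω s * ρ s) + d * ρ s by ring]
      exact h
    have hdiff : ∀ s, DifferentiableAt ℝ f s := fun s => (hder s).differentiableAt
    have hderiv : ∀ s, deriv f s = ρ s * (d - c * ω s) := fun s => (hder s).deriv
    rcases lt_or_gt_of_ne hne with h | h
    · -- t < t₀ : f strictly antitone on Iic t₀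
      have hanti : StrictAntiOn f (Set.Iic t₀) := by
        apply strictAntiOn_of_deriv_neg (convex_Iic t₀)
          (continuous_iff_continuousAt.mpr fun s => (hdiff s).continuousAt).continuousOn
        · intro s hs
          rw [interior_Iic] at hs
          have hlt : ω s < ω t₀ := hω hs
          have : c * ω s < d := by
            rw [hω₀] at hlt
            have := (lt_div_iff₀ hc).mp hlt
            linarith
          rw [hderiv]
          have h1 : 0 < d - c * ω s := by linarith
          exact mul_neg_of_neg_of_pos (hρ s) h1
      exact hanti (le_of_lt h) Set.self_mem_Iic h
    · -- t₀ < t : f strictly monotone on Ici t₀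
      have hmono : StrictMonoOn f (Set.Ici t₀) := by
        apply strictMonoOn_of_deriv_pos (convex_Ici t₀)
          (continuous_iff_continuousAt.mpr fun s => (hdiff s).continuousAt).continuousOn
        · intro s hs
          rw [interior_Ici] at hs
          have hlt : ω t₀ < ω s := hω hs
          have : d < c * ω s := by
            rw [hω₀] at hlt
            have := (div_lt_iff₀ hc).mp hlt
            linarith
          rw [hderiv]
          have h1 : d - c * ω s < 0 := by linarith
          exact mul_pos_of_neg_of_neg (hρ s) h1
      exact hmono Set.self_mem_Ici (le_of_lt h) h
  set g : Ω → ℝ := fun x =>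
    (a x * φ (u x) + b x * ψ (u x)) - (a x * φ (u₀ x) + b x * ψ (u₀ x)) with hg
  have hgint : Integrable g μ := hint.sub hint₀
  have hg0 : ∀ x, 0 ≤ g x := by
    intro x
    by_cases hx : u x = u₀ x
    · simp [hg, hx]
    · have := key (a x) (b x) (u₀ x) (u x) (hapos x) (hu₀ x) hx
      simp only [hg]
      linarith
  have hgzero : ∫ x, g x ∂μ = 0 := by
    rw [hg]
    rw [integral_sub hint hint₀]
    linarith [heq]
  have hae : g =ᵐ[μ] 0 := by
    have := (integral_eq_zero_iff_of_nonneg (fun x => hg0 x) hgint).mp hgzero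
    exact this
  filter_upwards [hae] with x hx
  by_contra hne
  have := key (a x) (b x) (u₀ x) (u x) (hapos x) (hu₀ x) hne
  have : 0 < g x := by simp only [hg]; linarith
  simp [hx] at this
end

section
/- Let μ be a σ-finite measure on a measurable space Ω, and let g, f: Ω → ℝ be nonnegative measurable probability density functions with respect to μ such that f(x) = 0 whenever g(x) = 0; set L(x) = f(x)/g(x) on {g > 0} and L(x) = 0 elsewhere. Let ω: ℝ → ℝ be strictly increasing, ρ: ℝ → ℝ strictly negative, and φ, ψ: ℝ → ℝ differentiable with φ' = −ω·ρ and ψ' = ρ. Suppose u₀: Ω → ℝ is measurable with ω(u₀(x)) = L(x) for all x with g(x) > 0, and the cost J(u₀) = ∫ φ(u₀)·g dμ + ∫ ψ(u₀)·f dμ is finite. Then for every measurable u: Ω → ℝ with finite cost J(u) = ∫ φ(u)·g dμ + ∫ ψ(u)·f dμ, one has J(u₀) ≤ J(u). -/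
open MeasureTheory

theorem stmt_6 {Ω : Type*} [MeasurableSpace Ω] (μ : Measure Ω) [SigmaFinite μ]
    (g f : Ω → ℝ) (hgm : Measurable g) (hfm : Measurable f)
    (hg0 : ∀ x, 0 ≤ g x) (hf0 : ∀ x, 0 ≤ f x)
    (hg1 : ∫ x, g x ∂μ = 1) (hf1 : ∫ x, f x ∂μ = 1)
    (habs : ∀ x, g x = 0 → f x = 0)
    (L : Ω → ℝ) (hL : ∀ x, L x = if 0 < g x then f x / g x else 0)
    (ω ρ φ ψ : ℝ → ℝ)
    (hω : StrictMono ω) (hρ : ∀ z, ρ z < 0)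
    (hφ : ∀ z, HasDerivAt φ (-(ω z * ρ z)) z)
    (hψ : ∀ z, HasDerivAt ψ (ρ z) z)
    (u₀ : Ω → ℝ) (hu₀m : Measurable u₀)
    (hu₀ : ∀ x, 0 < g x → ω (u₀ x) = L x)
    (hint₀g : Integrable (fun x => φ (u₀ x) * g x) μ)
    (hint₀f : Integrable (fun x => ψ (u₀ x) * f x) μ) :
    ∀ u : Ω → ℝ, Measurable u →
      Integrable (fun x => φ (u x) * g x) μ →
      Integrable (fun x => ψ (u x) * f x) μ →
      (∫ x, φ (u₀ x) * g x ∂μ) + (∫ x, ψ (u₀ x) * f x ∂μ)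
        ≤ (∫ x, φ (u x) * g x ∂μ) + (∫ x, ψ (u x) * f x ∂μ) := by
  intro u hum hintg hintf
  have key : ∀ x, φ (u₀ x) * g x + ψ (u₀ x) * f x ≤ φ (u x) * g x + ψ (u x) * f x := by
    intro x
    by_cases hgx : 0 < g x
    · -- on {g > 0}
      set G := g x with hG
      set F := f x with hF
      set a := u₀ x with ha
      have hωa : ω a = F / G := by rw [hu₀ x hgx, hL x, if_pos hgx]
      set h : ℝ → ℝ := fun z => φ z * G + ψ z * F with hh
      have hd : ∀ z, HasDerivAt h (ρ z * (F - ω z * G)) z := by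
        intro z
        have := ((hφ z).mul_const G).add ((hψ z).mul_const F)
        exact this.congr_deriv (by ring)
      have hcont : Continuous h :=
        continuous_iff_continuousAt.mpr fun z => (hd z).differentiableAt.continuousAt
      show h a ≤ h (u x)
      rcases le_total a (u x) with hle | hle
      · have hmono : MonotoneOn h (Set.Ici a) := by
          apply monotoneOn_of_deriv_nonneg (convex_Ici a) hcont.continuousOn
          · intro z hz
            exact (hd z).differentiableAt.differentiableWithinAt
          · intro z hz
            rw [(hd z).deriv]
            rw [interior_Ici] at hz
            have hωz : F / G < ω z := hωa ▸ hω hz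
            have : F < ω z * G := (div_lt_iff₀ hgx).mp hωz
            have h1 : F - ω z * G < 0 := by linarith
            exact le_of_lt (mul_pos_of_neg_of_neg (hρ z) h1)
        exact hmono (Set.self_mem_Ici) hle hle
      · have hanti : AntitoneOn h (Set.Iic a) := by
          apply antitoneOn_of_deriv_nonpos (convex_Iic a) hcont.continuousOn
          · intro z hz
            exact (hd z).differentiableAt.differentiableWithinAt
          · intro z hz
            rw [(hd z).deriv]
            rw [interior_Iic] at hz
            have hωz : ω z < F / G := hωa ▸ hω hz
            have : ω z * G < F := (lt_div_iff₀ hgx).mp hωz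
            have h1 : 0 < F - ω z * G := by linarith
            exact le_of_lt (mul_neg_of_neg_of_pos (hρ z) h1)
        exact hanti hle (Set.self_mem_Iic) hle
    · -- g x = 0, hence f x = 0
      have hg : g x = 0 := le_antisymm (not_lt.mp hgx) (hg0 x)
      have hf : f x = 0 := habs x hg
      simp [hg, hf]
  have h1 := integral_mono (hint₀g.add hint₀f) (hintg.add hintf) key
  simp only [Pi.add_apply] at h1
  rwa [integral_add hint₀g hint₀f, integral_add hintg hintf] at h1
end

section
/- Let ν and μ be σ-finite measures on measurable spaces 𝒴 and 𝒳, and let g, f: 𝒴 × 𝒳 → ℝ be nonnegative joint probability densities with respect to ν × μ with f(y,x) = 0 whenever g(y,x) = 0. Let g_X(x) = ∫ g(y,x) dν(y) and f_X(x) = ∫ f(y,x) dν(y) be the marginal densities and assume f_X(x) = 0 whenever g_X(x) = 0; set L(x) = f_X(x)/g_X(x) on {g_X > 0} and 0 elsewhere. Let ω: ℝ → ℝ be strictly increasing, ρ: ℝ → ℝ strictly negative, and φ, ψ: ℝ → ℝ differentiable with φ' = −ω·ρ and ψ' = ρ. Define J(u) = ∫ L(x)·φ(u(y,x))·g(y,x)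 d(ν×μ) + ∫ ψ(u(y,x))·f(y,x) d(ν×μ). If u₀: 𝒴 × 𝒳 → ℝ is measurable with ω(u₀(y,x)) = (f(y,x)/g(y,x))·(1/L(x)) at every point where g(y,x) > 0 and L(x) > 0, and J(u₀) is finite, then J(u₀) ≤ J(u) for every measurable u with J(u) finite. -/
open MeasureTheory

private lemma key_min (ω ρ φ ψ : ℝ → ℝ)
    (hω : StrictMono ω) (hρ : ∀ z, ρ z < 0)
    (hφ : ∀ z, HasDerivAt φ (-(ω z * ρ z)) z)
    (hψ : ∀ z, HasDerivAt ψ (ρ z) z)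
    (c fp a : ℝ) (hc : 0 < c) (ha : fp = c * ω a) (t : ℝ) :
    c * φ a + ψ a * fp ≤ c * φ t + ψ t * fp := by
  set h : ℝ → ℝ := fun s => c * φ s + ψ s * fp with hh
  have hd : ∀ z, HasDerivAt h (ρ z * c * (ω a - ω z)) z := by
    intro z
    have h1 := ((hφ z).const_mul c).add ((hψ z).mul_const fp)
    exact h1.congr_deriv (by rw [ha]; ring)
  have hdiff : Differentiable ℝ h := fun z => (hd z).differentiableAt
  have hderiv : ∀ z, deriv h z = ρ z * c * (ω a - ω z) := fun z => (hd z).deriv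
  rcases le_total a t with hat | hta
  · have hmono : MonotoneOn h (Set.Ici a) := by
      apply monotoneOn_of_deriv_nonneg (convex_Ici a) hdiff.continuous.continuousOn
        hdiff.differentiableOn
      intro x hx
      rw [interior_Ici] at hx
      rw [hderiv]
      have h2 : ω a - ω x ≤ 0 := sub_nonpos.2 (hω hx).le
      nlinarith [mul_nonneg (mul_nonneg (neg_nonneg.mpr (hρ x).le) hc.le) (neg_nonneg.mpr h2)]
    exact hmono Set.self_mem_Ici hat hat
  · have hanti : AntitoneOn h (Set.Iic a) := by
      apply antitoneOn_of_deriv_nonpos (convex_Iic a) hdiff.continuous.continuousOn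
        hdiff.differentiableOn
      intro x hx
      rw [interior_Iic] at hx
      rw [hderiv]
      have h2 : 0 ≤ ω a - ω x := sub_nonneg.2 (hω hx).le
      nlinarith [mul_nonneg (mul_nonneg (neg_nonneg.mpr (hρ x).le) hc.le) h2]
    exact hanti (by exact hta) Set.self_mem_Iic hta

theorem stmt_7 {𝒴 𝒳 : Type*} [MeasurableSpace 𝒴] [MeasurableSpace 𝒳]
    (ν : Measure 𝒴) (μ : Measure 𝒳) [SigmaFinite ν] [SigmaFinite μ]
    (g f : 𝒴 × 𝒳 → ℝ) (hgm : Measurable g) (hfm : Measurable f)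
    (hg0 : ∀ p, 0 ≤ g p) (hf0 : ∀ p, 0 ≤ f p)
    (hg1 : ∫ p, g p ∂(ν.prod μ) = 1) (hf1 : ∫ p, f p ∂(ν.prod μ) = 1)
    (habs : ∀ p, g p = 0 → f p = 0)
    (gX fX : 𝒳 → ℝ)
    (hgX : ∀ x, gX x = ∫ y, g (y, x) ∂ν) (hfX : ∀ x, fX x = ∫ y, f (y, x) ∂ν)
    (habsX : ∀ x, gX x = 0 → fX x = 0)
    (L : 𝒳 → ℝ) (hL : ∀ x, L x = if 0 < gX x then fX x / gX x else 0)
    (ω ρ φ ψ : ℝ → ℝ)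
    (hω : StrictMono ω) (hρ : ∀ z, ρ z < 0)
    (hφ : ∀ z, HasDerivAt φ (-(ω z * ρ z)) z)
    (hψ : ∀ z, HasDerivAt ψ (ρ z) z)
    (u₀ : 𝒴 × 𝒳 → ℝ) (hu₀m : Measurable u₀)
    (hu₀ : ∀ p : 𝒴 × 𝒳, 0 < g p → 0 < L p.2 →
      ω (u₀ p) = (f p / g p) * (1 / L p.2))
    (hint₀g : Integrable (fun p : 𝒴 × 𝒳 => L p.2 * φ (u₀ p) * g p) (ν.prod μ))
    (hint₀f : Integrable (fun p : 𝒴 × 𝒳 => ψ (u₀ p) * f p) (ν.prod μ)) :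
    ∀ u : 𝒴 × 𝒳 → ℝ, Measurable u →
      Integrable (fun p : 𝒴 × 𝒳 => L p.2 * φ (u p) * g p) (ν.prod μ) →
      Integrable (fun p : 𝒴 × 𝒳 => ψ (u p) * f p) (ν.prod μ) →
      (∫ p, L p.2 * φ (u₀ p) * g p ∂(ν.prod μ)) + (∫ p, ψ (u₀ p) * f p ∂(ν.prod μ))
        ≤ (∫ p, L p.2 * φ (u p) * g p ∂(ν.prod μ)) + (∫ p, ψ (u p) * f p ∂(ν.prod μ)) := by
  -- nonnegativity of marginals
  have hfX0 : ∀ x, 0 ≤ fX x := fun x => by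
    rw [hfX]; exact integral_nonneg fun y => hf0 (y, x)
  have hgX0 : ∀ x, 0 ≤ gX x := fun x => by
    rw [hgX]; exact integral_nonneg fun y => hg0 (y, x)
  have hL0 : ∀ x, 0 ≤ L x := by
    intro x; rw [hL]
    split_ifs with h
    · exact div_nonneg (hfX0 x) (hgX0 x)
    · exact le_rfl
  -- integrability of g and f
  have hgInt : Integrable g (ν.prod μ) := by
    by_contra h; rw [integral_undef h] at hg1; norm_num at hg1
  have hfInt : Integrable f (ν.prod μ) := by
    by_contra h; rw [integral_undef h] at hf1; norm_num at hf1
  -- measurability of L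
  have hgXm : Measurable gX := by
    have h1 : gX = fun x => ∫ y, g (y, x) ∂ν := funext hgX
    rw [h1]; exact hgm.stronglyMeasurable.integral_prod_left'.measurable
  have hfXm : Measurable fX := by
    have h1 : fX = fun x => ∫ y, f (y, x) ∂ν := funext hfX
    rw [h1]; exact hfm.stronglyMeasurable.integral_prod_left'.measurable
  have hLm : Measurable L := by
    have h1 : L = fun x => if 0 < gX x then fX x / gX x else 0 := funext hL
    rw [h1]
    exact Measurable.ite (measurableSet_lt measurable_const hgXm)
      (hfXm.div hgXm) measurable_const
  -- the bad set is null
  set S : Set (𝒴 × 𝒳) := {p | ¬ 0 < L p.2 ∧ f p ≠ 0} with hSdef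
  have hS : MeasurableSet S := by
    apply MeasurableSet.inter
    · exact (measurableSet_lt measurable_const (hLm.comp measurable_snd)).compl
    · exact (hfm (measurableSet_singleton 0)).compl
  have hxnull : ∀ᵐ x ∂μ, ν {y | (y, x) ∈ S} = 0 := by
    filter_upwards [hgInt.prod_left_ae, hfInt.prod_left_ae] with x hgx hfx
    by_cases hLx : 0 < L x
    · have he : {y | (y, x) ∈ S} = ∅ := by
        ext y; simp [hSdef, hLx]
      simp [he]
    · have hf0x : ∀ᵐ y ∂ν, f (y, x) = 0 := by
        by_cases hgXx : 0 < gX x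
        · have hfXx : fX x = 0 := by
            have h1 : L x = fX x / gX x := by rw [hL]; simp [hgXx]
            have h2 : fX x / gX x ≤ 0 := by rw [← h1]; exact not_lt.mp hLx
            have h3 : fX x ≤ 0 := by
              by_contra h4
              exact absurd (div_pos (lt_of_not_ge h4) hgXx) (not_lt.mpr h2)
            exact le_antisymm h3 (hfX0 x)
          rw [hfX] at hfXx
          have h5 := (integral_eq_zero_iff_of_nonneg (fun y => hf0 (y, x)) hfx).mp hfXx
          filter_upwards [h5] with y hy using hy
        · have hgXx0 : ∫ y, g (y, x) ∂ν = 0 := by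
            rw [← hgX]; exact le_antisymm (not_lt.mp hgXx) (hgX0 x)
          have h5 := (integral_eq_zero_iff_of_nonneg (fun y => hg0 (y, x)) hgx).mp hgXx0
          filter_upwards [h5] with y hy using habs (y, x) hy
      have hsub : {y | (y, x) ∈ S} ⊆ {y | ¬ f (y, x) = 0} := fun y hy => hy.2
      exact measure_mono_null hsub (ae_iff.mp hf0x)
  have hSnull : ν.prod μ S = 0 := by
    rw [← Measure.prod_swap, Measure.map_apply measurable_swap hS,
      Measure.measure_prod_null (hS.preimage measurable_swap)]
    filter_upwards [hxnull] with x hx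
    exact hx
  have hae : ∀ᵐ p ∂(ν.prod μ), ¬ 0 < L p.2 → f p = 0 := by
    rw [ae_iff]
    convert hSnull using 2
    ext p
    simp [hSdef]
  -- main argument
  intro u hum hintg hintf
  rw [← integral_add hint₀g hint₀f, ← integral_add hintg hintf]
  apply integral_mono_ae (hint₀g.add hint₀f) (hintg.add hintf)
  filter_upwards [hae] with p hp
  simp only [Pi.add_apply]
  rcases eq_or_lt_of_le (hg0 p) with hgp | hgp
  · -- g p = 0, hence f p = 0
    have hfp := habs p hgp.symm
    rw [← hgp, hfp]; simp
  · by_cases hLp : 0 < L p.2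
    · have hc : 0 < L p.2 * g p := mul_pos hLp hgp
      have ha : f p = (L p.2 * g p) * ω (u₀ p) := by
        rw [hu₀ p hgp hLp]
        field_simp
      have hk := key_min ω ρ φ ψ hω hρ hφ hψ (L p.2 * g p) (f p) (u₀ p) hc ha (u p)
      calc L p.2 * φ (u₀ p) * g p + ψ (u₀ p) * f p
          = L p.2 * g p * φ (u₀ p) + ψ (u₀ p) * f p := by ring
        _ ≤ L p.2 * g p * φ (u p) + ψ (u p) * f p := hk
        _ = L p.2 * φ (u p) * g p + ψ (u p) * f p := by ring
    · have hfp := hp hLp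
      have hLz : L p.2 = 0 := le_antisymm (not_lt.mp hLp) (hL0 p.2)
      rw [hfp, hLz]; simp
end

section
/- Let (Ω, 𝓕, P) be a probability space, X: Ω → 𝒳 and Y: Ω → 𝒴 random variables, and d: 𝒴 → ℝ measurable with d(Y) integrable. Let ω₀: ℝ → ℝ be strictly increasing, ρ: ℝ → ℝ strictly negative, and φ, ψ: ℝ → ℝ differentiable with φ' = −ω₀·ρ and ψ' = ρ. Let B: 𝒳 → ℝ be measurable such that B(X) is a version of the conditional expectation E[d(Y) | σ(X)]. Suppose u₀: 𝒳 → ℝ is measurable with ω₀(u₀(X)) = B(X) almost surely and E[φ(u₀(X)) + d(Y)·ψ(u₀(X))] finite. Then for every measurable u: 𝒳 → ℝ with E[φ(u(X)) + d(Y)·ψ(u(X))] finite, E[φ(u₀(X)) + d(Y)·ψ(u₀(X))] ≤ E[φ(u(X)) + d(Y)·ψ(u(X))]; in other words, minimizing the regular expectation E[φ(u(X)) + d(Y)·ψ(u(X))] over measurable functions u of X identifies the conditional expectation E[d(Y) | X] through ω₀(u₀(X)) = E[d(Y) | X]. -/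
open MeasureTheory

lemma min_lem (ω₀ ρ φ ψ : ℝ → ℝ) (hω₀ : StrictMono ω₀) (hρ : ∀ z, ρ z < 0)
    (hφ : ∀ z, HasDerivAt φ (-(ω₀ z * ρ z)) z) (hψ : ∀ z, HasDerivAt ψ (ρ z) z)
    (b z₀ z : ℝ) (h : ω₀ z₀ = b) :
    φ z₀ + b * ψ z₀ ≤ φ z + b * ψ z := by
  set F : ℝ → ℝ := fun t => φ t + b * ψ t with hF_def
  have hF : ∀ t, HasDerivAt F (ρ t * (b - ω₀ t)) t := by
    intro t
    have := (hφ t).add ((hψ t).const_mul b)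
    rw [show ρ t * (b - ω₀ t) = -(ω₀ t * ρ t) + b * ρ t by ring]
    exact this
  have hFc : ∀ t : ℝ, ContinuousAt F t := fun t => (hF t).differentiableAt.continuousAt
  have hderiv : ∀ t, deriv F t = ρ t * (b - ω₀ t) := fun t => (hF t).deriv
  rcases lt_trichotomy z z₀ with hlt | heq | hgt
  · have hanti : StrictAntiOn F (Set.Icc z z₀) := by
      apply strictAntiOn_of_deriv_neg (convex_Icc _ _)
        (fun t _ => (hFc t).continuousWithinAt)
      intro t ht
      rw [interior_Icc] at ht
      rw [hderiv]
      have h1 : ω₀ t < b := h ▸ hω₀ ht.2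
      exact mul_neg_of_neg_of_pos (hρ t) (by linarith)
    exact le_of_lt (hanti (Set.left_mem_Icc.2 hlt.le) (Set.right_mem_Icc.2 hlt.le) hlt)
  · rw [heq]
  · have hmono : StrictMonoOn F (Set.Icc z₀ z) := by
      apply strictMonoOn_of_deriv_pos (convex_Icc _ _)
        (fun t _ => (hFc t).continuousWithinAt)
      intro t ht
      rw [interior_Icc] at ht
      rw [hderiv]
      have h1 : b < ω₀ t := h ▸ hω₀ ht.1
      exact mul_pos_of_neg_of_neg (hρ t) (by linarith)
    exact le_of_lt (hmono (Set.left_mem_Icc.2 hgt.le) (Set.right_mem_Icc.2 hgt.le) hgt)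

theorem stmt_10 {Ω 𝒳 𝒴 : Type*} [MeasurableSpace Ω] [MeasurableSpace 𝒳] [MeasurableSpace 𝒴]
    (P : Measure Ω) [IsProbabilityMeasure P]
    (X : Ω → 𝒳) (Y : Ω → 𝒴) (hX : Measurable X) (hY : Measurable Y)
    (d : 𝒴 → ℝ) (hd : Measurable d)
    (hdint : Integrable (fun ω => d (Y ω)) P)
    (ω₀ ρ φ ψ : ℝ → ℝ)
    (hω₀ : StrictMono ω₀) (hρ : ∀ z, ρ z < 0)
    (hφ : ∀ z, HasDerivAt φ (-(ω₀ z * ρ z)) z)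
    (hψ : ∀ z, HasDerivAt ψ (ρ z) z)
    (B : 𝒳 → ℝ) (hB : Measurable B)
    (hBver : (fun ω => B (X ω))
      =ᵐ[P] P[fun ω => d (Y ω) | MeasurableSpace.comap X inferInstance])
    (u₀ : 𝒳 → ℝ) (hu₀m : Measurable u₀)
    (hu₀ : ∀ᵐ ω ∂P, ω₀ (u₀ (X ω)) = B (X ω))
    (hint₀ : Integrable (fun ω => φ (u₀ (X ω)) + d (Y ω) * ψ (u₀ (X ω))) P) :
    ∀ u : 𝒳 → ℝ, Measurable u →
      Integrable (fun ω => φ (u (X ω)) + d (Y ω) * ψ (u (X ω))) P →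
      ∫ ω, (φ (u₀ (X ω)) + d (Y ω) * ψ (u₀ (X ω))) ∂P
        ≤ ∫ ω, (φ (u (X ω)) + d (Y ω) * ψ (u (X ω))) ∂P := by
  intro u hum hintu
  set m := MeasurableSpace.comap X inferInstance with hm_def
  have hm := hX.comap_le
  haveI : SigmaFinite (P.trim hm) := by infer_instance
  have hXm : Measurable[m] X := fun s hs => ⟨s, hs, rfl⟩
  have hφc : Continuous φ :=
    continuous_iff_continuousAt.2 fun z => (hφ z).differentiableAt.continuousAt
  have hψc : Continuous ψ :=
    continuous_iff_continuousAt.2 fun z => (hψ z).differentiableAt.continuousAt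
  set a : 𝒳 → ℝ := fun x => φ (u x) - φ (u₀ x) with ha_def
  set c : 𝒳 → ℝ := fun x => ψ (u x) - ψ (u₀ x) with hc_def
  have ham : Measurable a := ((hφc.measurable.comp hum).sub (hφc.measurable.comp hu₀m))
  have hcm : Measurable c := ((hψc.measurable.comp hum).sub (hψc.measurable.comp hu₀m))
  set D : Ω → ℝ := fun ω => a (X ω) + d (Y ω) * c (X ω) with hD_def
  have hDeq : D = (fun ω => φ (u (X ω)) + d (Y ω) * ψ (u (X ω)))
      - (fun ω => φ (u₀ (X ω)) + d (Y ω) * ψ (u₀ (X ω))) := by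
    funext ω; simp only [hD_def, ha_def, hc_def, Pi.sub_apply]; ring
  have hD : Integrable D P := hDeq ▸ hintu.sub hint₀
  -- pointwise nonnegativity with B in place of d(Y)
  have key : ∀ᵐ ω ∂P, 0 ≤ a (X ω) + B (X ω) * c (X ω) := by
    filter_upwards [hu₀] with ω h
    have := min_lem ω₀ ρ φ ψ hω₀ hρ hφ hψ (B (X ω)) (u₀ (X ω)) (u (X ω)) h
    simp only [ha_def, hc_def]; nlinarith [this]
  -- truncation sets
  set s : ℕ → Set 𝒳 := fun n => {x | |a x| ≤ (n : ℝ)} ∩ {x | |c x| ≤ (n : ℝ)} with hs_def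
  have hsm : ∀ n, MeasurableSet (s n) := fun n =>
    (measurableSet_le ham.abs measurable_const).inter
      (measurableSet_le hcm.abs measurable_const)
  set A : ℕ → Set Ω := fun n => X ⁻¹' s n with hA_def
  have hAm : ∀ n, MeasurableSet[m] (A n) := fun n => ⟨s n, hsm n, rfl⟩
  -- per-n identification of conditional expectation on A n
  have main : ∀ n : ℕ, ∀ᵐ ω ∂P,
      ω ∈ A n → (P[D|m]) ω = a (X ω) + B (X ω) * c (X ω) := by
    intro n
    set f₁ : Ω → ℝ := (A n).indicator (fun ω => a (X ω)) with hf₁_def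
    set g : Ω → ℝ := (A n).indicator (fun ω => c (X ω)) with hg_def
    have hf₁sm : StronglyMeasurable[m] f₁ :=
      ((ham.comp hXm).indicator (hAm n)).stronglyMeasurable
    have hgsm : StronglyMeasurable[m] g :=
      ((hcm.comp hXm).indicator (hAm n)).stronglyMeasurable
    have hf₁int : Integrable f₁ P := by
      refine Integrable.mono' (integrable_const (n : ℝ))
        (hf₁sm.mono hm).aestronglyMeasurable (ae_of_all _ fun ω => ?_)
      by_cases hω : ω ∈ A n
      · rw [hf₁_def, Set.indicator_of_mem hω, Real.norm_eq_abs]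
        exact hω.1
      · rw [hf₁_def, Set.indicator_of_notMem hω]
        simp
    have hgdint : Integrable (g * fun ω => d (Y ω)) P := by
      refine Integrable.mono' (hdint.abs.const_mul (n : ℝ))
        ((hgsm.mono hm).aestronglyMeasurable.mul hdint.1) (ae_of_all _ fun ω => ?_)
      simp only [Pi.mul_apply, Real.norm_eq_abs, abs_mul]
      have hgb : |g ω| ≤ (n : ℝ) := by
        by_cases hω : ω ∈ A n
        · rw [hg_def, Set.indicator_of_mem hω]
          exact hω.2
        · rw [hg_def, Set.indicator_of_notMem hω]
          simp
      exact mul_le_mul_of_nonneg_right hgb (abs_nonneg _)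
    have hsplit : (A n).indicator D = f₁ + g * fun ω => d (Y ω) := by
      funext ω
      simp only [hf₁_def, hg_def, Pi.add_apply, Pi.mul_apply]
      by_cases hω : ω ∈ A n
      · rw [Set.indicator_of_mem hω, Set.indicator_of_mem hω, Set.indicator_of_mem hω]
        ring
      · rw [Set.indicator_of_notMem hω, Set.indicator_of_notMem hω,
          Set.indicator_of_notMem hω]
        ring
    have h1 : P[(A n).indicator D|m] =ᵐ[P] (A n).indicator (P[D|m]) :=
      condExp_indicator hD (hAm n)
    have h2 : P[(A n).indicator D|m] =ᵐ[P] f₁ + g * (fun ω => B (X ω)) := by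
      rw [hsplit]
      refine (condExp_add hf₁int hgdint m).trans ?_
      have e1 : P[f₁|m] = f₁ := condExp_of_stronglyMeasurable hm hf₁sm hf₁int
      have e2 : P[g * fun ω => d (Y ω)|m] =ᵐ[P] g * P[fun ω => d (Y ω)|m] :=
        condExp_mul_of_stronglyMeasurable_left hgsm hgdint hdint
      rw [e1]
      filter_upwards [e2, hBver] with ω h2 h3
      simp only [Pi.add_apply, Pi.mul_apply] at *
      rw [h2, ← h3]
    filter_upwards [h1.symm.trans h2] with ω hω hmem
    have : (A n).indicator (P[D|m]) ω = (P[D|m]) ω := Set.indicator_of_mem hmem _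
    rw [← this, hω]
    simp only [hf₁_def, hg_def, Pi.add_apply, Pi.mul_apply, Set.indicator_of_mem hmem]
    ring
  -- conclude a.e. nonnegativity of the conditional expectation
  have hnonneg : ∀ᵐ ω ∂P, 0 ≤ (P[D|m]) ω := by
    filter_upwards [ae_all_iff.2 main, key] with ω hall hkey
    set n : ℕ := ⌈max |a (X ω)| |c (X ω)|⌉₊ with hn_def
    have hceil : max |a (X ω)| |c (X ω)| ≤ (n : ℝ) := Nat.le_ceil _
    have hmem : ω ∈ A n :=
      ⟨le_trans (le_max_left _ _) hceil, le_trans (le_max_right _ _) hceil⟩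
    rw [hall n hmem]
    exact hkey
  have hint_eq : ∫ ω, (P[D|m]) ω ∂P = ∫ ω, D ω ∂P := integral_condExp hm
  have h0 : 0 ≤ ∫ ω, D ω ∂P := by
    rw [← hint_eq]
    exact integral_nonneg_of_ae hnonneg
  rw [hDeq] at h0
  simp only [Pi.sub_apply] at h0
  rw [integral_sub hintu hint₀] at h0
  linarith
end

section
/- Let μ be a σ-finite measure on a measurable space Ω and let g, f: Ω → ℝ be nonnegative measurable probability density functions with respect to μ such that g(x) > 0 implies f(x) > 0 and f(x) = 0 whenever g(x) = 0. Take ω(z) = e^z, let ρ: ℝ → ℝ be strictly negative, and let φ, ψ: ℝ → ℝ be differentiable with φ'(z) = −e^z·ρ(z) and ψ'(z) = ρ(z). Then the measurable function u₀(x) = log(f(x)/g(x)) (defined on {g > 0}, arbitrary elsewhere) satisfies: for every measurable u: Ω → ℝ with finite cost, ∫ φ(u₀)·g dμ + ∫ ψ(u₀)·f dμ ≤ ∫ φ(u)·g dμ + ∫ ψ(u)·f dμ; that is, the optimal function equals the log-likelihood ratio of the two densities. -/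
open MeasureTheory

lemma aux_min_stmt12 {ρ φ ψ : ℝ → ℝ} (hρ : ∀ z, ρ z < 0)
    (hφ : ∀ z, HasDerivAt φ (-(Real.exp z * ρ z)) z)
    (hψ : ∀ z, HasDerivAt ψ (ρ z) z)
    {G F a : ℝ} (hG : 0 < G) (ha : Real.exp a * G = F) (b : ℝ) :
    φ a * G + ψ a * F ≤ φ b * G + ψ b * F := by
  set h : ℝ → ℝ := fun z => φ z * G + ψ z * F with hh
  have hd : ∀ z, HasDerivAt h (ρ z * (F - Real.exp z * G)) z := by
    intro z
    have := ((hφ z).mul_const G).add ((hψ z).mul_const F)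
    exact this.congr_deriv (by ring)
  have hderiv : ∀ z, deriv h z = ρ z * (F - Real.exp z * G) := fun z => (hd z).deriv
  have hcont : Continuous h := by
    have : Differentiable ℝ h := fun z => (hd z).differentiableAt
    exact this.continuous
  rcases le_total a b with hab | hab
  · have hmono : StrictMonoOn h (Set.Ici a) := by
      apply strictMonoOn_of_deriv_pos (convex_Ici a) hcont.continuousOn
      intro z hz
      rw [interior_Ici] at hz
      rw [hderiv]
      have h1 : Real.exp a < Real.exp z := Real.exp_lt_exp.2 hz
      have h2 : F - Real.exp z * G < 0 := by nlinarith
      nlinarith [hρ z]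
    rcases eq_or_lt_of_le hab with rfl | hab
    · exact le_refl _
    · exact (hmono (Set.self_mem_Ici) (le_of_lt hab) hab).le
  · have hanti : StrictAntiOn h (Set.Iic a) := by
      apply strictAntiOn_of_deriv_neg (convex_Iic a) hcont.continuousOn
      intro z hz
      rw [interior_Iic] at hz
      rw [hderiv]
      have h1 : Real.exp z < Real.exp a := Real.exp_lt_exp.2 hz
      have h2 : 0 < F - Real.exp z * G := by nlinarith
      nlinarith [hρ z]
    rcases eq_or_lt_of_le hab with rfl | hab
    · exact le_refl _
    · exact (hanti (le_of_lt hab) Set.self_mem_Iic hab).le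

theorem stmt_12 {Ω : Type*} [MeasurableSpace Ω] (μ : Measure Ω) [SigmaFinite μ]
    (g f : Ω → ℝ) (hgm : Measurable g) (hfm : Measurable f)
    (hg0 : ∀ x, 0 ≤ g x) (hf0 : ∀ x, 0 ≤ f x)
    (hg1 : ∫ x, g x ∂μ = 1) (hf1 : ∫ x, f x ∂μ = 1)
    (hpos : ∀ x, 0 < g x → 0 < f x)
    (habs : ∀ x, g x = 0 → f x = 0)
    (ρ φ ψ : ℝ → ℝ) (hρ : ∀ z, ρ z < 0)
    (hφ : ∀ z, HasDerivAt φ (-(Real.exp z * ρ z)) z)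
    (hψ : ∀ z, HasDerivAt ψ (ρ z) z)
    (u₀ : Ω → ℝ) (hu₀m : Measurable u₀)
    (hu₀ : ∀ x, 0 < g x → u₀ x = Real.log (f x / g x))
    (hint₀g : Integrable (fun x => φ (u₀ x) * g x) μ)
    (hint₀f : Integrable (fun x => ψ (u₀ x) * f x) μ) :
    ∀ u : Ω → ℝ, Measurable u →
      Integrable (fun x => φ (u x) * g x) μ →
      Integrable (fun x => ψ (u x) * f x) μ →
      (∫ x, φ (u₀ x) * g x ∂μ) + (∫ x, ψ (u₀ x) * f x ∂μ)
        ≤ (∫ x, φ (u x) * g x ∂μ) + (∫ x, ψ (u x) * f x ∂μ) := by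
  intro u hum hug huf
  have hpt : ∀ x, φ (u₀ x) * g x + ψ (u₀ x) * f x ≤ φ (u x) * g x + ψ (u x) * f x := by
    intro x
    rcases eq_or_lt_of_le (hg0 x) with hg | hg
    · have hf : f x = 0 := habs x hg.symm
      simp [← hg, hf]
    · have hf : 0 < f x := hpos x hg
      have ha : Real.exp (u₀ x) * g x = f x := by
        rw [hu₀ x hg, Real.exp_log (by positivity)]
        field_simp
      exact aux_min_stmt12 hρ hφ hψ hg ha (u x)
  calc (∫ x, φ (u₀ x) * g x ∂μ) + (∫ x, ψ (u₀ x) * f x ∂μ)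
      = ∫ x, (φ (u₀ x) * g x + ψ (u₀ x) * f x) ∂μ := (integral_add hint₀g hint₀f).symm
    _ ≤ ∫ x, (φ (u x) * g x + ψ (u x) * f x) ∂μ :=
        integral_mono (hint₀g.add hint₀f) (hug.add huf) hpt
    _ = (∫ x, φ (u x) * g x ∂μ) + (∫ x, ψ (u x) * f x ∂μ) := integral_add hug huf
end

section
/- Define ω(z) = sinh(z), ρ(z) = −exp(−|z|/2), φ(z) = (exp(|z|/2) − 1) + (1/3)(exp(−3|z|/2) − 1), and ψ(z) = 2·sign(z)·(exp(−|z|/2) − 1) on ℝ. Then ω is strictly increasing with range all of ℝ, ρ(z) < 0 for all z, and φ and ψ are differentiable on all of ℝ (including at z = 0) with φ'(z) = −ω(z)·ρ(z) and ψ'(z) = ρ(z) for every z. -/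
noncomputable def Fsel : ℝ → ℝ := fun y => (Real.exp (y / 2) - 1) + (1 / 3) * (Real.exp (-(3 * y) / 2) - 1)
noncomputable def Gsel : ℝ → ℝ := fun y => (Real.exp (-y / 2) - 1) + (1 / 3) * (Real.exp ((3 * y) / 2) - 1)
noncomputable def Psel : ℝ → ℝ := fun y => 2 * (Real.exp (-y / 2) - 1)
noncomputable def Qsel : ℝ → ℝ := fun y => -2 * (Real.exp (y / 2) - 1)

lemma expLin (a z : ℝ) : HasDerivAt (fun y : ℝ => Real.exp (a * y)) (a * Real.exp (a * z)) z := by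
  have := (Real.hasDerivAt_exp (a * z)).comp z ((hasDerivAt_id z).const_mul a)
  simpa [mul_comm, Function.comp_def] using this

lemma hF (z : ℝ) : HasDerivAt Fsel (Real.sinh z * Real.exp (-z / 2)) z := by
  have h1 : HasDerivAt (fun y : ℝ => Real.exp (y / 2)) ((1/2) * Real.exp ((1/2) * z)) z := by
    have := expLin (1/2) z
    convert this using 2 with y
    · ring_nf
  have h2 : HasDerivAt (fun y : ℝ => Real.exp (-(3 * y) / 2)) ((-3/2) * Real.exp ((-3/2) * z)) z := by
    have := expLin (-3/2) z
    convert this using 2 with y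
    · ring_nf
  have h := (h1.sub_const 1).add ((h2.sub_const 1).const_mul (1/3))
  refine h.congr_deriv (Eq.symm ?_)
  rw [Real.sinh_eq]
  have e1 : Real.exp z * Real.exp (-z / 2) = Real.exp ((1/2) * z) := by
    rw [← Real.exp_add]; ring_nf
  have e2 : Real.exp (-z) * Real.exp (-z / 2) = Real.exp ((-3/2) * z) := by
    rw [← Real.exp_add]; ring_nf
  linear_combination e1 / 2 - e2 / 2

lemma hG (z : ℝ) : HasDerivAt Gsel (Real.sinh z * Real.exp (z / 2)) z := by
  have h1 : HasDerivAt (fun y : ℝ => Real.exp (-y / 2)) ((-1/2) * Real.exp ((-1/2) * z)) z := by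
    have := expLin (-1/2) z
    convert this using 2 with y
    · ring_nf
  have h2 : HasDerivAt (fun y : ℝ => Real.exp ((3 * y) / 2)) ((3/2) * Real.exp ((3/2) * z)) z := by
    have := expLin (3/2) z
    convert this using 2 with y
    · ring_nf
  have h := (h1.sub_const 1).add ((h2.sub_const 1).const_mul (1/3))
  refine h.congr_deriv (Eq.symm ?_)
  rw [Real.sinh_eq]
  have e1 : Real.exp z * Real.exp (z / 2) = Real.exp ((3/2) * z) := by
    rw [← Real.exp_add]; ring_nf
  have e2 : Real.exp (-z) * Real.exp (z / 2) = Real.exp ((-1/2) * z) := by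
    rw [← Real.exp_add]; ring_nf
  linear_combination e1 / 2 - e2 / 2

lemma hP (z : ℝ) : HasDerivAt Psel (-Real.exp (-z / 2)) z := by
  have h1 : HasDerivAt (fun y : ℝ => Real.exp (-y / 2)) ((-1/2) * Real.exp ((-1/2) * z)) z := by
    have := expLin (-1/2) z
    convert this using 2 with y
    · ring_nf
  have h := (h1.sub_const 1).const_mul 2
  refine h.congr_deriv ?_
  have : Real.exp ((-1/2) * z) = Real.exp (-z / 2) := by ring_nf
  rw [this]; ring

lemma hQ (z : ℝ) : HasDerivAt Qsel (-Real.exp (z / 2)) z := by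
  have h1 : HasDerivAt (fun y : ℝ => Real.exp (y / 2)) ((1/2) * Real.exp ((1/2) * z)) z := by
    have := expLin (1/2) z
    convert this using 2 with y
    · ring_nf
  have h := (h1.sub_const 1).const_mul (-2)
  refine h.congr_deriv ?_
  have : Real.exp ((1/2) * z) = Real.exp (z / 2) := by ring_nf
  rw [this]; ring

theorem stmt_13 (ω ρ φ ψ : ℝ → ℝ)
    (hωdef : ∀ z, ω z = Real.sinh z)
    (hρdef : ∀ z, ρ z = -Real.exp (-|z| / 2))
    (hφdef : ∀ z, φ z = (Real.exp (|z| / 2) - 1) + (1 / 3) * (Real.exp (-(3 * |z|) / 2) - 1))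
    (hψdef : ∀ z, ψ z = 2 * Real.sign z * (Real.exp (-|z| / 2) - 1)) :
    StrictMono ω ∧ Set.range ω = Set.univ ∧ (∀ z, ρ z < 0) ∧
    (∀ z, HasDerivAt φ (-(ω z * ρ z)) z) ∧
    (∀ z, HasDerivAt ψ (ρ z) z) := by
  refine ⟨?_, ?_, ?_, ?_, ?_⟩
  · intro a b h
    rw [hωdef, hωdef]
    exact Real.sinh_lt_sinh.mpr h
  · refine Set.range_eq_univ.mpr fun y => ⟨Real.arsinh y, ?_⟩
    rw [hωdef, Real.sinh_arsinh]
  · intro z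
    rw [hρdef]
    simpa using Real.exp_pos (-|z| / 2)
  · intro z
    rcases lt_trichotomy z 0 with hz | hz | hz
    · have hev : φ =ᶠ[nhds z] Gsel := by
        filter_upwards [Iio_mem_nhds hz] with y hy
        rw [hφdef, abs_of_neg hy, Gsel]
        norm_num
        try ring_nf
      have := (hG z).congr_of_eventuallyEq hev
      refine this.congr_deriv ?_
      rw [hωdef, hρdef, abs_of_neg hz]
      ring_nf
    · subst hz
      have hd : (-(ω 0 * ρ 0)) = 0 := by
        rw [hωdef, hρdef]; simp
      rw [hd]
      have hc1 : ∀ y ∈ Set.Ici (0:ℝ), φ y = Fsel y := by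
        intro y hy
        rw [hφdef, abs_of_nonneg hy]; rfl
      have hc2 : ∀ y ∈ Set.Iic (0:ℝ), φ y = Gsel y := by
        intro y hy
        rw [hφdef, abs_of_nonpos hy, Gsel]
        norm_num
        try ring_nf
      have h1 : HasDerivWithinAt φ 0 (Set.Ici 0) 0 := by
        have := ((hF 0).hasDerivWithinAt (s := Set.Ici 0)).congr hc1 (hc1 0 Set.self_mem_Ici)
        simpa using this
      have h2 : HasDerivWithinAt φ 0 (Set.Iic 0) 0 := by
        have := ((hG 0).hasDerivWithinAt (s := Set.Iic 0)).congr hc2 (hc2 0 Set.self_mem_Iic)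
        simpa using this
      have := h2.union h1
      rw [Set.Iic_union_Ici] at this
      exact this.hasDerivAt (by simp)
    · have hev : φ =ᶠ[nhds z] Fsel := by
        filter_upwards [Ioi_mem_nhds hz] with y hy
        rw [hφdef, abs_of_pos hy]; rfl
      have := (hF z).congr_of_eventuallyEq hev
      refine this.congr_deriv ?_
      rw [hωdef, hρdef, abs_of_pos hz]
      ring_nf
  · intro z
    rcases lt_trichotomy z 0 with hz | hz | hz
    · have hev : ψ =ᶠ[nhds z] Qsel := by
        filter_upwards [Iio_mem_nhds hz] with y hy
        rw [hψdef, abs_of_neg hy, Real.sign_of_neg hy, Qsel]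
        ring_nf
      have := (hQ z).congr_of_eventuallyEq hev
      refine this.congr_deriv ?_
      rw [hρdef, abs_of_neg hz]
      ring_nf
    · subst hz
      have hd : ρ 0 = -1 := by rw [hρdef]; simp
      rw [hd]
      have hc1 : ∀ y ∈ Set.Ici (0:ℝ), ψ y = Psel y := by
        intro y hy
        rcases eq_or_lt_of_le (by simpa using hy) with h | h
        · rw [hψdef, ← h]; simp [Psel]
        · rw [hψdef, abs_of_pos h, Real.sign_of_pos h, Psel]; ring
      have hc2 : ∀ y ∈ Set.Iic (0:ℝ), ψ y = Qsel y := by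
        intro y hy
        rcases eq_or_lt_of_le (by simpa using hy) with h | h
        · rw [hψdef, h]; simp [Qsel]
        · rw [hψdef, abs_of_neg h, Real.sign_of_neg h, Qsel]; ring_nf
      have h1 : HasDerivWithinAt ψ (-1) (Set.Ici 0) 0 := by
        have := ((hP 0).hasDerivWithinAt (s := Set.Ici 0)).congr hc1 (hc1 0 Set.self_mem_Ici)
        simpa using this
      have h2 : HasDerivWithinAt ψ (-1) (Set.Iic 0) 0 := by
        have := ((hQ 0).hasDerivWithinAt (s := Set.Iic 0)).congr hc2 (hc2 0 Set.self_mem_Iic)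
        simpa using this
      have := h2.union h1
      rw [Set.Iic_union_Ici] at this
      exact this.hasDerivAt (by simp)
    · have hev : ψ =ᶠ[nhds z] Psel := by
        filter_upwards [Ioi_mem_nhds hz] with y hy
        rw [hψdef, abs_of_pos hy, Real.sign_of_pos hy, Psel]
        ring
      have := (hP z).congr_of_eventuallyEq hev
      refine this.congr_deriv ?_
      rw [hρdef, abs_of_pos hz]
end
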